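/- Let G be a connected graph of order r ≥ 2, let H be a connected graph of order t ≥ 2, and let v be a vertex of H of degree t − 1; write H − v for the graph obtained from H by deleting v. (i) If H − v is connected with diameter two, then dim_s(G∘_v H) = (r − 1)(t − 1) + dim_s(H − v). (ii) If H − v is not connected or has diameter greater than two, then dim_s(G∘_v H) = (r − 1)(t − 1) + dim_s(H). -/

import Mathlib

/-!
A set of vertices strongly resolves a connected graph iff it is a vertex cover of its strong
resolving graph, whose edges join the mutually maximally distant pairs (Oellermann and
Peters-Fransen). Two vertices `(a, x)`, `(b, y)` of `G ∘_v H` in different copies `a ≠ b` are at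
distance `d_H(x, v) + d_G(a, b) + d_H(v, y)`. Hence no root `(a, v)` is maximally distant from
anything, and, as `v` is universal in `H`, two non-root vertices in different copies are always
mutually maximally distant, while within one copy they are so exactly when they are in `H`. So the
strong resolving graph of `G ∘_v H`, restricted to its non-root vertices, is the lexicographic
product `K_r[H_SR - v]`, whose vertex cover number is `(r - 1)(t - 1) + β(H_SR - v)`.

If `H - v` is connected of diameter two, its distances are those of `H`, and `H_SR - v` is the
strong resolving graph of `H - v`. Otherwise `v` is isolated in `H_SR`: a vertex mutually maximally
distant from `v` would be universal in `H - v`, making it connected of diameter at most two.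
-/

namespace RootedStrong

variable {V : Type*}

/-- `u` is maximally distant from `v`: every neighbor `w` of `u` satisfies `d(v,w) ≤ d(u,v)`. -/
def MaxDistant (G : SimpleGraph V) (u v : V) : Prop :=
  ∀ w, G.Adj u w → G.dist v w ≤ G.dist u v

/-- `u` and `v` are mutually maximally distant. -/
def MMD (G : SimpleGraph V) (u v : V) : Prop :=
  MaxDistant G u v ∧ MaxDistant G v u

/-- The boundary `∂(G)` of a graph. -/
def boundary (G : SimpleGraph V) : Set V := {u | ∃ v, MMD G u v}

/-- A vertex is simplicial if its neighborhood induces a complete graph. -/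
def Simplicial (G : SimpleGraph V) (u : V) : Prop :=
  ∀ x ∈ G.neighborSet u, ∀ y ∈ G.neighborSet u, x ≠ y → G.Adj x y

/-- The set `σ(G)` of simplicial vertices. -/
def simplicialSet (G : SimpleGraph V) : Set V := {u | Simplicial G u}

/-- `w` strongly resolves `u` and `v`. -/
def StronglyResolves (G : SimpleGraph V) (w u v : V) : Prop :=
  G.dist w u = G.dist w v + G.dist v u ∨ G.dist w v = G.dist w u + G.dist u v

/-- A set of vertices is a strong metric generator if every pair of distinct vertices is
strongly resolved by some of its elements. -/
def IsStrongGenerator (G : SimpleGraph V) (S : Set V) : Prop :=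
  ∀ u v : V, u ≠ v → ∃ w ∈ S, StronglyResolves G w u v

/-- The strong metric dimension of a graph. -/
noncomputable def sdim (G : SimpleGraph V) [Fintype V] : ℕ :=
  sInf {n | ∃ S : Finset V, S.card = n ∧ IsStrongGenerator G (S : Set V)}

/-- A strong metric basis: a strong metric generator of minimum cardinality. -/
def IsStrongBasis (G : SimpleGraph V) [Fintype V] (S : Finset V) : Prop :=
  IsStrongGenerator G (S : Set V) ∧ S.card = sdim G

/-- The rooted product graph `G ∘_v H`. -/
def rootedProd {α β : Type*} (G : SimpleGraph α) (H : SimpleGraph β) (v : β) :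
    SimpleGraph (α × β) where
  Adj p q := (p.1 = q.1 ∧ H.Adj p.2 q.2) ∨ (p.2 = v ∧ q.2 = v ∧ G.Adj p.1 q.1)
  symm := by
    constructor
    rintro ⟨a, x⟩ ⟨b, y⟩ (⟨h1, h2⟩ | ⟨h1, h2, h3⟩)
    · exact Or.inl ⟨h1.symm, h2.symm⟩
    · exact Or.inr ⟨h2, h1, h3.symm⟩
  loopless := by
    constructor
    rintro ⟨a, x⟩ (⟨_, h2⟩ | ⟨_, _, h3⟩)
    · exact H.irrefl h2
    · exact G.irrefl h3

/-- Two distinct vertices are true twins if they have equal closed neighborhoods. -/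
def TrueTwins (G : SimpleGraph V) (x y : V) : Prop :=
  x ≠ y ∧ ∀ z, (z = x ∨ G.Adj x z) ↔ (z = y ∨ G.Adj y z)

/-- A twin-free clique: a clique containing no pair of true twins. -/
def IsTwinFreeClique (G : SimpleGraph V) (X : Set V) : Prop :=
  (∀ x ∈ X, ∀ y ∈ X, x ≠ y → G.Adj x y) ∧ ∀ x ∈ X, ∀ y ∈ X, ¬ TrueTwins G x y

/-- The twin-free clique number `ϖ(G)`. -/
noncomputable def twinFreeCliqueNum (G : SimpleGraph V) : ℕ :=
  sSup {n | ∃ X : Set V, IsTwinFreeClique G X ∧ X.ncard = n}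

end RootedStrong

namespace SimpleGraph

variable {V W : Type*} {G : SimpleGraph V} {u w : V}

lemma Reachable.exists_adj_dist_add_one (h : G.Reachable u w) (hne : u ≠ w) :
    ∃ z, G.Adj u z ∧ G.dist z w + 1 = G.dist u w := by
  obtain ⟨p, hp⟩ := h.exists_walk_length_eq_dist
  cases p with
  | nil => exact absurd rfl hne
  | @cons _ z _ hadj q =>
    refine ⟨z, hadj, le_antisymm ?_ (hadj.reachable.dist_triangle_left w |>.trans ?_)⟩
    · simpa [← hp] using dist_le q
    · rw [dist_eq_one_iff_adj.mpr hadj, add_comm]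

lemma Reachable.le_add_dist_of_lipschitz (f : V → ℕ)
    (hf : ∀ p q, G.Adj p q → f p ≤ f q + 1) (h : G.Reachable u w) :
    f u ≤ f w + G.dist u w := by
  obtain ⟨p, hp⟩ := h.exists_walk_length_eq_dist
  rw [← hp]
  clear hp h
  induction p with
  | nil => simp
  | cons hadj q ih =>
    have := hf _ _ hadj
    rw [Walk.length_cons]
    omega

lemma Reachable.dist_map_le {G' : SimpleGraph W} (f : G →g G') (h : G.Reachable u w) :
    G'.dist (f u) (f w) ≤ G.dist u w := by
  obtain ⟨p, hp⟩ := h.exists_walk_length_eq_dist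
  simpa [hp] using dist_le (p.map f)

lemma IsUniversal.diam_le_two (h : G.IsUniversal u) : G.diam ≤ 2 := by
  have : G.ediam ≤ 2 :=
    (ediam_le_two_mul_eccent u).trans (by grw [(eccent_le_one_iff u).mpr h]; norm_num)
  exact ENat.toNat_le_of_le_natCast this

lemma ncard_neighborSet_eq_card_sub_one_iff [Fintype V] :
    (G.neighborSet u).ncard = Fintype.card V - 1 ↔ G.IsUniversal u := by
  classical
  rw [← degree_eq_card_sub_one, ← card_neighborSet_eq_degree, Set.ncard_eq_toFinset_card',
    Set.toFinset_card]

end SimpleGraph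

namespace RootedStrong

open SimpleGraph

variable {V : Type*}

section StrongResolving

variable {G : SimpleGraph V}

def strongResolvingGraph (G : SimpleGraph V) : SimpleGraph V where
  Adj u w := u ≠ w ∧ MMD G u w
  symm := ⟨fun _ _ h => ⟨h.1.symm, h.2.symm⟩⟩
  loopless := ⟨fun _ h => h.1 rfl⟩

lemma eq_of_maxDistant_of_dist_eq_add (hc : G.Connected) {s u w : V} (hmd : MaxDistant G w u)
    (h : G.dist s u = G.dist s w + G.dist w u) : s = w := by
  by_contra hsw
  obtain ⟨z, hadj, hz⟩ := (hc.preconnected w s).exists_adj_dist_add_one (Ne.symm hsw)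
  have hzu : G.dist u z ≤ G.dist w u := hmd z hadj
  have htri : G.dist s u ≤ G.dist s z + G.dist z u := hc.dist_triangle
  have := G.dist_comm (u := u) (v := z)
  have := G.dist_comm (u := s) (v := z)
  have := G.dist_comm (u := s) (v := w)
  omega

lemma MMD.eq_or_eq_of_stronglyResolves (hc : G.Connected) {s u w : V} (hmmd : MMD G u w)
    (hres : StronglyResolves G s u w) : s = u ∨ s = w :=
  hres.elim (fun h => .inr (eq_of_maxDistant_of_dist_eq_add hc hmmd.2 h))
    (fun h => .inl (eq_of_maxDistant_of_dist_eq_add hc hmmd.1 h))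

lemma exists_maxDistant_dist_eq_add [Finite V] (hc : G.Connected) (w u : V) :
    ∃ u', MaxDistant G u' w ∧ G.dist w u' = G.dist w u + G.dist u u' := by
  -- Take `u'` farthest from `w` among the vertices `x` with `u` on a geodesic from `w` to `x`.
  obtain ⟨u', (hu' : G.dist w u' = G.dist w u + G.dist u u'), hmax⟩ :=
    Set.Finite.exists_maximalFor (G.dist w) {x | G.dist w x = G.dist w u + G.dist u x}
      (Set.toFinite _) ⟨u, by simp⟩
  refine ⟨u', fun z hadj => ?_, hu'⟩
  by_contra! hlt
  have hz1 : G.dist u' z = 1 := dist_eq_one_iff_adj.mpr hadj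
  have h1 : G.dist w z ≤ G.dist w u' + G.dist u' z := hc.dist_triangle
  have h2 : G.dist u z ≤ G.dist u u' + G.dist u' z := hc.dist_triangle
  have h3 : G.dist w z ≤ G.dist w u + G.dist u z := hc.dist_triangle
  have := G.dist_comm (u := u') (v := w)
  have := hmax (j := z) (by show G.dist w z = _; omega) (by omega)
  omega

lemma isStrongGenerator_iff_isVertexCover [Finite V] (hc : G.Connected) (S : Set V) :
    IsStrongGenerator G S ↔ (strongResolvingGraph G).IsVertexCover S := by
  refine ⟨fun hS u w ⟨hne, hmmd⟩ => ?_, fun hS u w hne => ?_⟩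
  · obtain ⟨s, hs, hres⟩ := hS u w hne
    rcases hmmd.eq_or_eq_of_stronglyResolves hc hres with rfl | rfl
    exacts [.inl hs, .inr hs]
  -- Extend the geodesic from `w` to `u` beyond `u` to `u'`, then the one from `u'` to `w`
  -- beyond `w` to `w'`: then `u'`, `w'` are mutually maximally distant, and each of them
  -- strongly resolves `u`, `w`.
  obtain ⟨u', hu'md, hu'⟩ := exists_maxDistant_dist_eq_add hc w u
  obtain ⟨w', hw'md, hw'⟩ := exists_maxDistant_dist_eq_add hc u' w
  have c1 := G.dist_comm (u := u) (v := u')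
  have c2 := G.dist_comm (u := w) (v := u')
  have c3 := G.dist_comm (u := u) (v := w)
  have c4 := G.dist_comm (u := w) (v := w')
  have c5 := G.dist_comm (u := u) (v := w')
  have hu'w' : MaxDistant G u' w' := fun z hz => by
    have := hu'md z hz
    have : G.dist w' z ≤ G.dist w' w + G.dist w z := hc.dist_triangle
    have := G.dist_comm (u := w') (v := u')
    omega
  have hne' : u' ≠ w' := by
    rintro rfl
    rw [dist_self] at hw'
    exact hne ((hc.dist_eq_zero_iff).mp (by omega))
  have h1 : G.dist u' w' ≤ G.dist u' u + G.dist u w' := hc.dist_triangle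
  have h2 : G.dist u w' ≤ G.dist u w + G.dist w w' := hc.dist_triangle
  rcases hS ⟨hne', hu'w', hw'md⟩ with h | h
  · exact ⟨u', h, .inr (by omega)⟩
  · exact ⟨w', h, .inl (by omega)⟩

end StrongResolving

section VertexCover

variable {W : Type*} {K : SimpleGraph V}

-- The `ℕ`-valued counterpart of `SimpleGraph.vertexCoverNum`, written in the same form as `sdim`.
noncomputable def vertexCoverCard (K : SimpleGraph V) : ℕ :=
  sInf {n | ∃ S : Finset V, S.card = n ∧ K.IsVertexCover S}

lemma vertexCoverCard_le {S : Finset V} (h : K.IsVertexCover S) : vertexCoverCard K ≤ S.card :=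
  Nat.sInf_le ⟨S, rfl, h⟩

lemma exists_isVertexCover_card_eq [Fintype V] (K : SimpleGraph V) :
    ∃ S : Finset V, K.IsVertexCover S ∧ S.card = vertexCoverCard K := by
  obtain ⟨S, hcard, hS⟩ := Nat.sInf_mem (⟨_, Finset.univ, rfl, by simp⟩ :
    {n | ∃ S : Finset V, S.card = n ∧ K.IsVertexCover S}.Nonempty)
  exact ⟨S, hS, hcard⟩

lemma vertexCoverCard_le_card [Fintype V] (K : SimpleGraph V) :
    vertexCoverCard K ≤ Fintype.card V :=
  vertexCoverCard_le (S := Finset.univ) (by simp)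

lemma sdim_eq_vertexCoverCard {G : SimpleGraph V} [Fintype V] (hc : G.Connected) :
    sdim G = vertexCoverCard (strongResolvingGraph G) := by
  simp only [sdim, vertexCoverCard, isStrongGenerator_iff_isVertexCover hc]

variable {γ : Type*}

lemma vertexCoverCard_comap [Fintype V] [Fintype W] (f : W ↪ V) (K : SimpleGraph V)
    (hf : ∀ u w, K.Adj u w → u ∈ Set.range f) :
    vertexCoverCard (K.comap f) = vertexCoverCard K := by
  classical
  apply le_antisymm
  · obtain ⟨S, hS, hcard⟩ := exists_isVertexCover_card_eq K
    refine hcard ▸ (vertexCoverCard_le (S := S.preimage f f.injective.injOn) ?_).trans ?_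
    · intro a b hab
      simpa using hS hab
    · exact Finset.card_le_card_of_injOn f (fun a ha => by simpa using ha) f.injective.injOn
  · obtain ⟨T, hT, hcard⟩ := exists_isVertexCover_card_eq (K.comap f)
    refine hcard ▸ (vertexCoverCard_le (S := T.map f) ?_).trans (Finset.card_map f).le
    intro u w huw
    obtain ⟨a, rfl⟩ := hf u w huw
    obtain ⟨b, rfl⟩ := hf w _ huw.symm
    simpa using hT (show (K.comap f).Adj a b from huw)

def lexProd (G : SimpleGraph V) (P : SimpleGraph γ) : SimpleGraph (V × γ) where
  Adj p q := G.Adj p.1 q.1 ∨ (p.1 = q.1 ∧ P.Adj p.2 q.2)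
  symm := ⟨fun _ _ h => h.imp (fun h => h.symm) fun h => ⟨h.1.symm, h.2.symm⟩⟩
  loopless := ⟨fun _ h => h.elim G.irrefl fun h => P.irrefl h.2⟩

lemma vertexCoverCard_top_lexProd_le [Fintype V] [Nonempty V] [Fintype γ] (P : SimpleGraph γ) :
    vertexCoverCard (lexProd (⊤ : SimpleGraph V) P) ≤
      (Fintype.card V - 1) * Fintype.card γ + vertexCoverCard P := by
  classical
  obtain ⟨T, hT, hcard⟩ := exists_isVertexCover_card_eq P
  obtain ⟨c⟩ := ‹Nonempty V›
  have hdisj : Disjoint ((Finset.univ.erase c) ×ˢ (Finset.univ : Finset γ)) ({c} ×ˢ T) := by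
    rw [Finset.disjoint_left]
    rintro ⟨a, x⟩ h1 h2
    simp_all
  refine (vertexCoverCard_le (S := (Finset.univ.erase c) ×ˢ Finset.univ ∪ {c} ×ˢ T) ?_).trans ?_
  · rintro ⟨a, x⟩ ⟨b, y⟩ (hab | ⟨rfl, hxy⟩)
    · by_cases a = c <;> grind [top_adj]
    · have := hT hxy
      by_cases a = c <;> grind
  · rw [Finset.card_union_of_disjoint hdisj]
    simp [hcard]

lemma le_vertexCoverCard_top_lexProd [Fintype V] [Nonempty V] [Fintype γ] (P : SimpleGraph γ) :
    (Fintype.card V - 1) * Fintype.card γ + vertexCoverCard P ≤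
      vertexCoverCard (lexProd (⊤ : SimpleGraph V) P) := by
  classical
  obtain ⟨S, hS, hcard⟩ := exists_isVertexCover_card_eq (lexProd (⊤ : SimpleGraph V) P)
  rw [← hcard]
  have hP := vertexCoverCard_le_card P
  obtain ⟨k, hk⟩ : ∃ k, Fintype.card V = k + 1 := Nat.exists_eq_add_one.mpr Fintype.card_pos
  by_cases hfull : ∀ p, p ∈ S
  · rw [Finset.eq_univ_iff_forall.mpr hfull, Finset.card_univ, Fintype.card_prod, hk,
      Nat.add_sub_cancel, add_mul]
    omega
  push Not at hfull
  obtain ⟨⟨c, x₀⟩, hc⟩ := hfull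
  -- Each vertex outside the copy of `c` is adjacent to `(c, x₀) ∉ S`, so lies in `S`.
  have hrest : S.filter (fun p => ¬p.1 = c) = (Finset.univ.erase c) ×ˢ Finset.univ := by
    ext ⟨a, x⟩
    simp only [Finset.mem_filter, Finset.mem_product, Finset.mem_erase, Finset.mem_univ,
      and_true]
    refine ⟨And.right, fun ha => ⟨?_, ha⟩⟩
    simpa [hc] using hS (show (lexProd ⊤ P).Adj (a, x) (c, x₀) from .inl ha)
  have hcopy : vertexCoverCard P ≤ ((S.filter (fun p => p.1 = c)).image Prod.snd).card := by
    refine vertexCoverCard_le fun x y hxy => ?_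
    have := hS (show (lexProd ⊤ P).Adj (c, x) (c, y) from .inr ⟨rfl, hxy⟩)
    simp only [Finset.coe_image, Finset.coe_filter, Set.mem_image, Set.mem_ofPred_eq]
    aesop
  have hsplit := Finset.card_filter_add_card_filter_not (s := S) (fun p => p.1 = c)
  rw [hrest, Finset.card_product, Finset.card_erase_of_mem (Finset.mem_univ c),
    Finset.card_univ, Finset.card_univ] at hsplit
  have := Finset.card_image_le (s := S.filter (fun p => p.1 = c)) (f := Prod.snd)
  omega

theorem vertexCoverCard_top_lexProd [Fintype V] [Nonempty V] [Fintype γ] (P : SimpleGraph γ) :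
    vertexCoverCard (lexProd (⊤ : SimpleGraph V) P) =
      (Fintype.card V - 1) * Fintype.card γ + vertexCoverCard P :=
  (vertexCoverCard_top_lexProd_le P).antisymm (le_vertexCoverCard_top_lexProd P)

end VertexCover

section RootedProduct

variable {α β : Type*} {G : SimpleGraph α} {H : SimpleGraph β} {v : β}

def copyHom (G : SimpleGraph α) (H : SimpleGraph β) (v : β) (a : α) : H →g rootedProd G H v :=
  ⟨fun x => (a, x), fun h => .inl ⟨rfl, h⟩⟩

def rootHom (G : SimpleGraph α) (H : SimpleGraph β) (v : β) : G →g rootedProd G H v :=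
  ⟨fun a => (a, v), fun h => .inr ⟨rfl, rfl, h⟩⟩

lemma rootedProd_connected (hG : G.Connected) (hH : H.Connected) :
    (rootedProd G H v).Connected := by
  have : Nonempty α := hG.nonempty
  refine (connected_iff _).mpr ⟨fun ⟨a, x⟩ ⟨b, y⟩ => ?_, ⟨(Classical.arbitrary α, v)⟩⟩
  exact ((hH x v).map (copyHom G H v a)).trans
    (((hG a b).map (rootHom G H v)).trans ((hH v y).map (copyHom G H v b)))

lemma le_rootedProd_dist [DecidableEq α] (hG : G.Connected) (hH : H.Connected)
    (a b : α) (x y : β) :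
    (if a = b then H.dist x y else H.dist x v + G.dist a b + H.dist v y) ≤
      (rootedProd G H v).dist (a, x) (b, y) := by
  -- The bound, read as a function of the first vertex, is 1-Lipschitz and vanishes at `(b, y)`.
  have := (rootedProd_connected (v := v) hG hH (a, x) (b, y)).le_add_dist_of_lipschitz
    (fun p => if p.1 = b then H.dist p.2 y else H.dist p.2 v + G.dist p.1 b + H.dist v y) ?_
  · simpa using this
  rintro ⟨a₁, x₁⟩ ⟨a₂, x₂⟩ (⟨h, hadj⟩ | ⟨h₁, h₂, hadj⟩)
  · dsimp only at h hadj ⊢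
    subst h
    have := hadj.reachable.dist_triangle_left y
    have := hadj.reachable.dist_triangle_left v
    rw [dist_eq_one_iff_adj.mpr hadj] at *
    split_ifs <;> omega
  · dsimp only at h₁ h₂ hadj ⊢
    subst h₁ h₂
    have := hadj.reachable.dist_triangle_left b
    rw [dist_eq_one_iff_adj.mpr hadj] at *
    split_ifs with hb₁ hb₂ hb₂
    · exact absurd (hb₁.trans hb₂.symm) hadj.ne
    · subst hb₁
      simp only [dist_self, zero_add, dist_eq_one_iff_adj.mpr hadj.symm]
      omega
    · subst hb₂
      simp only [dist_self, zero_add, dist_eq_one_iff_adj.mpr hadj]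
      omega
    · simp only [dist_self, zero_add]
      omega

lemma rootedProd_dist_of_fst_eq (hG : G.Connected) (hH : H.Connected) (a : α) (x y : β) :
    (rootedProd G H v).dist (a, x) (a, y) = H.dist x y := by
  classical
  exact le_antisymm ((hH x y).dist_map_le (copyHom G H v a))
    (by simpa using le_rootedProd_dist (v := v) hG hH a a x y)

lemma rootedProd_dist_of_fst_ne (hG : G.Connected) (hH : H.Connected) {a b : α} (hab : a ≠ b)
    (x y : β) :
    (rootedProd G H v).dist (a, x) (b, y) = H.dist x v + G.dist a b + H.dist v y := by
  classical
  refine le_antisymm ?_ (by simpa [hab] using le_rootedProd_dist (v := v) hG hH a b x y)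
  have hR := rootedProd_connected (v := v) hG hH
  calc (rootedProd G H v).dist (a, x) (b, y)
      ≤ (rootedProd G H v).dist (a, x) (a, v) + (rootedProd G H v).dist (a, v) (b, v) +
          (rootedProd G H v).dist (b, v) (b, y) :=
        hR.dist_triangle.trans (Nat.add_le_add_right hR.dist_triangle _)
    _ ≤ H.dist x v + G.dist a b + H.dist v y :=
        Nat.add_le_add (Nat.add_le_add ((hH x v).dist_map_le (copyHom G H v a))
          ((hG a b).dist_map_le (rootHom G H v))) ((hH v y).dist_map_le (copyHom G H v b))

lemma maxDistant_rootedProd_of_fst_ne (hG : G.Connected) (hH : H.Connected) {a b : α} {x : β}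
    (hx : x ≠ v) (hxv : MaxDistant H x v) (hab : a ≠ b) (y : β) :
    MaxDistant (rootedProd G H v) (a, x) (b, y) := by
  rintro ⟨a', x'⟩ (⟨h, hadj⟩ | ⟨h, -, -⟩)
  · dsimp only at h hadj
    subst h
    rw [rootedProd_dist_of_fst_ne hG hH hab.symm, rootedProd_dist_of_fst_ne hG hH hab]
    have := hxv x' hadj
    have := G.dist_comm (u := a) (v := b)
    have := H.dist_comm (u := y) (v := v)
    omega
  · exact absurd h hx

lemma maxDistant_rootedProd_iff_of_fst_eq (hG : G.Connected) (hH : H.Connected) {x : β}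
    (hx : x ≠ v) (a : α) (y : β) :
    MaxDistant (rootedProd G H v) (a, x) (a, y) ↔ MaxDistant H x y := by
  refine ⟨fun h z hz => ?_, ?_⟩
  · simpa only [rootedProd_dist_of_fst_eq hG hH] using h (a, z) (.inl ⟨rfl, hz⟩)
  · rintro h ⟨a', x'⟩ (⟨h', hadj⟩ | ⟨h', -, -⟩)
    · dsimp only at h' hadj
      subst h'
      simpa only [rootedProd_dist_of_fst_eq hG hH] using h x' hadj
    · exact absurd h' hx

lemma not_maxDistant_rootedProd_root [Nontrivial α] [Nontrivial β] (hG : G.Connected)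
    (hH : H.Connected) {a : α} {q : α × β} (hq : q ≠ (a, v)) :
    ¬ MaxDistant (rootedProd G H v) (a, v) q := by
  obtain ⟨b, y⟩ := q
  intro hmd
  by_cases hb : b = a
  · subst hb
    obtain ⟨a', ha'⟩ := hG.preconnected.exists_adj_of_nontrivial b
    have := hmd (a', v) (.inr ⟨rfl, rfl, ha'⟩)
    rw [rootedProd_dist_of_fst_ne hG hH ha'.ne, rootedProd_dist_of_fst_eq hG hH,
      dist_eq_one_iff_adj.mpr ha', dist_self, H.dist_comm] at this
    omega
  · obtain ⟨z, hz⟩ := hH.preconnected.exists_adj_of_nontrivial v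
    have := hmd (a, z) (.inl ⟨rfl, hz⟩)
    rw [rootedProd_dist_of_fst_ne hG hH hb, rootedProd_dist_of_fst_ne hG hH (Ne.symm hb),
      dist_eq_one_iff_adj.mpr hz, dist_self] at this
    have := G.dist_comm (u := a) (v := b)
    have := H.dist_comm (u := y) (v := v)
    omega

lemma maxDistant_of_isUniversal (hU : H.IsUniversal v) {x : β} (hx : x ≠ v) :
    MaxDistant H x v := by
  intro w _
  rw [dist_eq_one_iff_adj.mpr (hU hx.symm).symm]
  rcases eq_or_ne v w with rfl | hvw
  · simp
  · exact (dist_eq_one_iff_adj.mpr (hU hvw)).le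

def nonRootEmbedding (α : Type*) (v : β) : α × {w : β | w ≠ v} ↪ α × β :=
  (Function.Embedding.refl α).prodMap (Function.Embedding.subtype _)

lemma comap_strongResolvingGraph_rootedProd (hU : H.IsUniversal v) (hG : G.Connected)
    (hH : H.Connected) :
    (strongResolvingGraph (rootedProd G H v)).comap (nonRootEmbedding α v) =
      lexProd ⊤ ((strongResolvingGraph H).induce {w | w ≠ v}) := by
  ext ⟨a, x, hx⟩ ⟨b, y, hy⟩
  show (a, x) ≠ (b, y) ∧ MMD _ (a, x) (b, y) ↔ a ≠ b ∨ (a = b ∧ x ≠ y ∧ MMD H x y)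
  by_cases hab : a = b
  · subst hab
    simp only [ne_eq, Prod.mk.injEq, true_and, not_true_eq_false, false_or, MMD,
      maxDistant_rootedProd_iff_of_fst_eq hG hH hx, maxDistant_rootedProd_iff_of_fst_eq hG hH hy]
  · have : MMD (rootedProd G H v) (a, x) (b, y) :=
      ⟨maxDistant_rootedProd_of_fst_ne hG hH hx (maxDistant_of_isUniversal hU hx) hab y,
        maxDistant_rootedProd_of_fst_ne hG hH hy (maxDistant_of_isUniversal hU hy) (Ne.symm hab) x⟩
    simp [hab, this]

theorem sdim_rootedProd [Fintype α] [Fintype β] [DecidableEq β] [Nontrivial α] [Nontrivial β]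
    (hU : H.IsUniversal v) (hG : G.Connected) (hH : H.Connected) :
    sdim (rootedProd G H v) = (Fintype.card α - 1) * (Fintype.card β - 1) +
      vertexCoverCard ((strongResolvingGraph H).induce {w | w ≠ v}) := by
  have hroot : ∀ p q, (strongResolvingGraph (rootedProd G H v)).Adj p q →
      p ∈ Set.range (nonRootEmbedding α v) := by
    rintro ⟨a, x⟩ q ⟨hne, hmd, -⟩
    have hx : x ≠ v := by
      rintro rfl
      exact not_maxDistant_rootedProd_root hG hH (Ne.symm hne) hmd
    exact ⟨(a, ⟨x, hx⟩), rfl⟩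
  rw [sdim_eq_vertexCoverCard (rootedProd_connected hG hH),
    ← vertexCoverCard_comap (nonRootEmbedding α v) _ hroot,
    comap_strongResolvingGraph_rootedProd hU hG hH, vertexCoverCard_top_lexProd, Set.card_ne_eq]

end RootedProduct

section UniversalVertex

variable {β : Type*} {H : SimpleGraph β} {v : β}

lemma isUniversal_induce_of_maxDistant (hU : H.IsUniversal v) {y : β} (hy : y ≠ v)
    (hmd : MaxDistant H v y) : (H.induce {w | w ≠ v}).IsUniversal ⟨y, hy⟩ := by
  rintro ⟨z, hz⟩ hne
  have hyz : y ≠ z := fun h => hne (Subtype.ext h)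
  have h1 : H.dist y z ≤ 1 := by
    simpa [dist_eq_one_iff_adj.mpr (hU hy.symm)] using hmd z (hU (Ne.symm hz))
  have h0 := (Connected.of_isUniversal hU).pos_dist_of_ne hyz
  exact (dist_eq_one_iff_adj.mp (by omega) : H.Adj y z)

lemma induce_strongResolvingGraph_eq [Finite β] (hU : H.IsUniversal v)
    (hc : (H.induce {w | w ≠ v}).Connected) (hd : (H.induce {w | w ≠ v}).diam ≤ 2) :
    (strongResolvingGraph H).induce {w | w ≠ v} =
      strongResolvingGraph (H.induce {w | w ≠ v}) := by
  have hH := Connected.of_isUniversal hU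
  -- Both graphs have diameter at most two, so their distances agree.
  have hdist : ∀ a b : {w : β | w ≠ v}, (H.induce {w | w ≠ v}).dist a b = H.dist a b := by
    intro a b
    rcases eq_or_ne a b with rfl | hne
    · simp
    by_cases hadj : H.Adj a b
    · rw [dist_eq_one_iff_adj.mpr hadj,
        dist_eq_one_iff_adj.mpr (show (H.induce {w | w ≠ v}).Adj a b from hadj)]
    have : Nonempty {w : β | w ≠ v} := ⟨a⟩
    have h1 := hc.one_lt_dist_of_ne_of_not_adj hne hadj
    have h2 := (dist_le_diam (connected_iff_ediam_ne_top.mp hc) (u := a) (v := b)).trans hd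
    have h3 := hH.one_lt_dist_of_ne_of_not_adj (Subtype.coe_injective.ne hne) hadj
    have h4 := dist_le (.cons (hU a.2.symm).symm (.cons (hU b.2.symm) .nil) : H.Walk a b)
    simp only [Walk.length_cons, Walk.length_nil] at h4
    omega
  have hmd : ∀ a b : {w : β | w ≠ v}, a ≠ b →
      (MaxDistant (H.induce {w | w ≠ v}) a b ↔ MaxDistant H a b) := by
    intro a b hne
    simp only [MaxDistant, hdist]
    refine ⟨fun h z hz => ?_, fun h z hz => h z hz⟩
    by_cases hzv : z = v
    · subst hzv
      rw [H.dist_comm, dist_eq_one_iff_adj.mpr (hU b.2.symm)]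
      exact hH.pos_dist_of_ne (Subtype.coe_injective.ne hne)
    · exact h ⟨z, hzv⟩ hz
  ext a b
  show (a : β) ≠ b ∧ MMD H a b ↔ a ≠ b ∧ MMD _ a b
  rw [Subtype.coe_injective.ne_iff]
  exact and_congr_right fun hne => (and_congr (hmd a b hne) (hmd b a hne.symm)).symm

lemma vertexCoverCard_induce_strongResolvingGraph [Fintype β] [DecidableEq β]
    (hU : H.IsUniversal v)
    (h : ¬ (H.induce {w | w ≠ v}).Connected ∨ 2 < (H.induce {w | w ≠ v}).diam) :
    vertexCoverCard ((strongResolvingGraph H).induce {w | w ≠ v}) = sdim H := by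
  rw [sdim_eq_vertexCoverCard (Connected.of_isUniversal hU)]
  refine vertexCoverCard_comap _ _ fun u w ⟨hne, hmd, _⟩ => ⟨⟨u, fun hu => ?_⟩, rfl⟩
  subst hu
  have hw := isUniversal_induce_of_maxDistant hU hne.symm hmd
  rcases h with h | h
  · exact h (Connected.of_isUniversal hw)
  · exact absurd hw.diam_le_two (not_le.mpr h)

end UniversalVertex

theorem statement13 {α β : Type*} [Fintype α] [Fintype β] [DecidableEq β]
    (G : SimpleGraph α) (H : SimpleGraph β)
    (hG : G.Connected) (hH : H.Connected)
    {r t : ℕ} (hr : Fintype.card α = r) (h2r : 2 ≤ r)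
    (ht : Fintype.card β = t) (h2t : 2 ≤ t)
    (v : β) (hv : (H.neighborSet v).ncard = t - 1) :
    ((H.induce {w : β | w ≠ v}).Connected ∧ (H.induce {w : β | w ≠ v}).diam = 2 →
      (sdim (rootedProd G H v) : ℤ) =
        ((r : ℤ) - 1) * ((t : ℤ) - 1) + sdim (H.induce {w : β | w ≠ v})) ∧
    (¬ (H.induce {w : β | w ≠ v}).Connected ∨ 2 < (H.induce {w : β | w ≠ v}).diam →
      (sdim (rootedProd G H v) : ℤ) = ((r : ℤ) - 1) * ((t : ℤ) - 1) + sdim H) := by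
  subst hr ht
  have : Nontrivial α := Fintype.one_lt_card_iff_nontrivial.mp h2r
  have : Nontrivial β := Fintype.one_lt_card_iff_nontrivial.mp h2t
  have hU : H.IsUniversal v := ncard_neighborSet_eq_card_sub_one_iff.mp hv
  rw [sdim_rootedProd hU hG hH]
  push_cast [Nat.cast_sub (one_le_two.trans h2r), Nat.cast_sub (one_le_two.trans h2t)]
  refine ⟨fun ⟨hc, hd⟩ => ?_, fun h => ?_⟩
  · rw [induce_strongResolvingGraph_eq hU hc hd.le, ← sdim_eq_vertexCoverCard hc]
  · rw [vertexCoverCard_induce_strongResolvingGraph hU h]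

end RootedStrong
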